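/- arXiv:1910.09322 — 5 statements merged into one kernel-verified Lean document; each statement's English description precedes it below -/
import Mathlib

section
/- Error propagation bound for Momentum Value Iteration (Theorem 1). For every k ≥ 0, after k+1 iterations of MoVI one has the componentwise inequality q_* − q_{π_{k+1}} ≤ (1/(k+1)) [ (I − γP_{π_*})^{-1} (E_{k+1} + q_{k+1} − q_0) − (I − γP_{π_{k+1}})^{-1} ( Σ_{j=0}^{k−1} γ^j E'_{k,j} + Σ_{j=0}^{k} γ^j P_{j:1} (T_{π_1} q_0 − q_0) ) ]. -/
/-!
Let `D_ρ(n) = ∑_{i < n} (T_ρ q_i - q_i)`. Since `T_ρ` is affine, `D_ρ(k+1) = (k+1) (T_ρ h_k - h_k)`,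
and `q_ρ - h_k = (I - γ P_ρ)⁻¹ (T_ρ h_k - h_k)` when `T_ρ q_ρ = q_ρ`; hence
`(k+1) (q_* - q_{π_{k+1}}) = (I - γ P_*)⁻¹ D_*(k+1) - (I - γ P_{π_{k+1}})⁻¹ D_{π_{k+1}}(k+1)`.
Both resolvents are monotone (a minimum principle for stochastic matrices), so it suffices to bound
the residual sums. Greediness of `π_n` for `h_{n-1}` gives `D_ρ(n) ≤ D_{π_n}(n)` for every `ρ`.
Consequently the increments `F_t = D_{π_{t+1}}(t+1) - D_{π_t}(t)` satisfy
`F_t ≤ T_{π_{t+1}} q_t - q_t = q_{t+1} - q_t - ε_{t+1}`, which telescopes to the upper bound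
`E_{k+1} + q_{k+1} - q_0`, and `F_{t+1} ≥ γ P_{π_{t+1}} F_t - (I - γ P_{π_{t+1}}) ε_{t+1}`, which,
unrolled by variation of constants and summed over `t ≤ k`, gives the lower bound.
-/

open Finset MeasureTheory
open scoped MeasureTheory

noncomputable section

namespace MoVIFormal

variable {S A : Type} [Fintype S] [Fintype A] [Nonempty S] [Nonempty A]
  [DecidableEq S] [DecidableEq A]

/-- `P` is a transition kernel: `P sa s'` is the probability of moving to `s'` from
state-action pair `sa`. -/
def IsKernel (P : S × A → S → ℝ) : Prop :=
  (∀ sa s', 0 ≤ P sa s') ∧ ∀ sa, ∑ s', P sa s' = 1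

/-- The operator `P_π` acting on `q`-functions. -/
def Pop (P : S × A → S → ℝ) (π : S → A) (q : S × A → ℝ) : S × A → ℝ :=
  fun sa => ∑ s', P sa s' * q (s', π s')

/-- The Bellman evaluation operator `T_π q = r + γ P_π q`. -/
def Tpol (P : S × A → S → ℝ) (r : S × A → ℝ) (γ : ℝ) (π : S → A) (q : S × A → ℝ) :
    S × A → ℝ :=
  fun sa => r sa + γ * Pop P π q sa

/-- The Bellman optimality operator `T_*`. -/
def Topt (P : S × A → S → ℝ) (r : S × A → ℝ) (γ : ℝ) (q : S × A → ℝ) : S × A → ℝ :=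
  fun sa => r sa + γ * ∑ s', P sa s' * (⨆ a', q (s', a'))

/-- `π` is greedy with respect to `q`: `T_π q = T_* q`. -/
def Greedy (P : S × A → S → ℝ) (r : S × A → ℝ) (γ : ℝ) (π : S → A) (q : S × A → ℝ) :
    Prop :=
  Tpol P r γ π q = Topt P r γ q

/-- The stochastic matrix of the operator `P_π`, so that `P_π q = (Pmat P π).mulVec q`. -/
def Pmat (P : S × A → S → ℝ) (π : S → A) : Matrix (S × A) (S × A) ℝ :=
  fun sa sa' => if sa'.2 = π sa'.1 then P sa sa'.1 else 0

/-- The resolvent matrix `(I - γ P_π)⁻¹`. -/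
def Res (P : S × A → S → ℝ) (γ : ℝ) (π : S → A) : Matrix (S × A) (S × A) ℝ :=
  (1 - γ • Pmat P π)⁻¹

/-- The composed kernels `P_{j:i} = P_{π_j} P_{π_{j-1}} ⋯ P_{π_i}` for `i ≤ j`,
and the identity otherwise. -/
def Pcomp (P : S × A → S → ℝ) (π : ℕ → S → A) (j i : ℕ) : Matrix (S × A) (S × A) ℝ :=
  (((List.range' i (j + 1 - i)).reverse).map fun t => Pmat P (π t)).prod

/-- The MoVI iterates: `π (k+1)` is greedy w.r.t. `h k`,
`q (k+1) = T_{π (k+1)} (q k) + ε (k+1)` and `h k` is the running average of `q 0, …, q k`. -/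
def IsMoVI (P : S × A → S → ℝ) (r : S × A → ℝ) (γ : ℝ)
    (π : ℕ → S → A) (q h : ℕ → S × A → ℝ) (ε : ℕ → S × A → ℝ) : Prop :=
  h 0 = q 0 ∧
  (∀ k : ℕ, Greedy P r γ (π (k + 1)) (h k)) ∧
  (∀ k : ℕ, q (k + 1) = fun sa => Tpol P r γ (π (k + 1)) (q k) sa + ε (k + 1) sa) ∧
  (∀ k : ℕ, h (k + 1) = fun sa => ((k + 1 : ℝ) * h k sa + q (k + 1) sa) / (k + 2))

/-- The negative cumulative error `E_k = -∑_{j=1}^k ε_j`. -/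
def Ecum (ε : ℕ → S × A → ℝ) (k : ℕ) : S × A → ℝ :=
  fun sa => -(∑ j ∈ Finset.Icc 1 k, ε j sa)

/-- The weighted negative cumulative error
`E'_{k,j} = -∑_{i=1}^{k-j} P_{i+j:i+1} (I - γ P_{π_i}) ε_i`. -/
def Ew (P : S × A → S → ℝ) (γ : ℝ) (π : ℕ → S → A) (ε : ℕ → S × A → ℝ)
    (k j : ℕ) : S × A → ℝ :=
  fun sa =>
    -(∑ i ∈ Finset.Icc 1 (k - j),
        (Pcomp P π (i + j) (i + 1)).mulVec ((1 - γ • Pmat P (π i)).mulVec (ε i)) sa)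

/-- Supremum norm of a `q`-function. -/
def supNorm (q : S × A → ℝ) : ℝ := ⨆ sa : S × A, |q sa|

/-- `μ`-weighted `ℓ1`-norm of a `q`-function. -/
def l1Norm (μ : S × A → ℝ) (q : S × A → ℝ) : ℝ := ∑ sa, μ sa * |q sa|

/-- `μ` is a probability distribution on `S × A`. -/
def IsDist (μ : S × A → ℝ) : Prop :=
  (∀ sa, 0 ≤ μ sa) ∧ ∑ sa, μ sa = 1

/-- The discounted cumulative occupancy measure `d_{π,μ} = (1-γ) μ (I - γ P_π)⁻¹`. -/
def docc (P : S × A → S → ℝ) (γ : ℝ) (μ : S × A → ℝ) (π : S → A) : S × A → ℝ :=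
  (1 - γ) • Matrix.vecMul μ (Res P γ π)

/-- Operator norm induced by the supremum norm (maximum absolute row sum). -/
def opNormInf (M : Matrix (S × A) (S × A) ℝ) : ℝ :=
  ⨆ sa : S × A, ∑ sa', |M sa sa'|

open Matrix

section Stochastic

variable {ι : Type*} [Fintype ι] [DecidableEq ι] {M : Matrix ι ι ℝ} {γ : ℝ}

lemma mulVec_mono_of_mem_rowStochastic (hM : M ∈ rowStochastic ℝ ι) : Monotone (M *ᵥ ·) :=
  fun _ _ hxy i => Finset.sum_le_sum fun j _ => mul_le_mul_of_nonneg_left (hxy j) (hM.1 i j)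

lemma nonneg_of_one_sub_smul_mulVec_nonneg (hM : M ∈ rowStochastic ℝ ι) (hγ0 : 0 ≤ γ)
    (hγ1 : γ < 1) {x : ι → ℝ} (hx : 0 ≤ (1 - γ • M) *ᵥ x) : 0 ≤ x := by
  intro i
  show 0 ≤ x i
  have : Nonempty ι := ⟨i⟩
  obtain ⟨i₀, hmin⟩ := Finite.exists_min x
  have havg : x i₀ ≤ (M *ᵥ x) i₀ := by
    calc x i₀ = (M *ᵥ (x i₀ • 1)) i₀ := by
          rw [mulVec_smul, one_vecMul_of_mem_rowStochastic hM]; simp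
      _ ≤ (M *ᵥ x) i₀ := mulVec_mono_of_mem_rowStochastic hM (fun j => by simpa using hmin j) i₀
  have hx₀ : 0 ≤ x i₀ - γ * (M *ᵥ x) i₀ := by
    simpa [sub_mulVec, smul_mulVec] using hx i₀
  have hscaled : 0 ≤ (1 - γ) * x i₀ := by
    nlinarith [mul_le_mul_of_nonneg_left havg hγ0]
  exact (nonneg_of_mul_nonneg_right hscaled (sub_pos.2 hγ1)).trans (hmin i)

lemma isUnit_one_sub_smul_of_mem_rowStochastic (hM : M ∈ rowStochastic ℝ ι) (hγ0 : 0 ≤ γ)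
    (hγ1 : γ < 1) : IsUnit (1 - γ • M) := by
  rw [← mulVec_injective_iff_isUnit]
  have key : ∀ {u v : ι → ℝ}, (1 - γ • M) *ᵥ u = (1 - γ • M) *ᵥ v → v ≤ u := fun huv =>
    sub_nonneg.1 <| nonneg_of_one_sub_smul_mulVec_nonneg hM hγ0 hγ1 <| by
      rw [mulVec_sub, huv, sub_self]
  exact fun x y hxy => le_antisymm (key hxy.symm) (key hxy)

lemma inv_one_sub_smul_mulVec_one_sub_smul_mulVec (hM : M ∈ rowStochastic ℝ ι) (hγ0 : 0 ≤ γ)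
    (hγ1 : γ < 1) (x : ι → ℝ) : (1 - γ • M)⁻¹ *ᵥ ((1 - γ • M) *ᵥ x) = x := by
  rw [mulVec_mulVec, nonsing_inv_mul _ ((isUnit_one_sub_smul_of_mem_rowStochastic hM hγ0 hγ1).map
    detMonoidHom), one_mulVec]

lemma inv_one_sub_smul_mulVec_mono (hM : M ∈ rowStochastic ℝ ι) (hγ0 : 0 ≤ γ) (hγ1 : γ < 1) :
    Monotone ((1 - γ • M)⁻¹ *ᵥ ·) := by
  intro x y hxy
  have hdet := (isUnit_one_sub_smul_of_mem_rowStochastic hM hγ0 hγ1).map detMonoidHom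
  rw [← sub_nonneg]
  refine nonneg_of_one_sub_smul_mulVec_nonneg hM hγ0 hγ1 ?_
  rw [mulVec_sub, mulVec_mulVec, mulVec_mulVec, mul_nonsing_inv _ hdet, one_mulVec, one_mulVec]
  exact sub_nonneg.2 hxy

end Stochastic

section Bellman

omit [Nonempty S] [Nonempty A] [DecidableEq S] [DecidableEq A]

variable {P : S × A → S → ℝ} {r : S × A → ℝ} {γ : ℝ}

lemma Greedy.Tpol_le (hP : IsKernel P) (hγ0 : 0 ≤ γ) {ρ : S → A} {x : S × A → ℝ}
    (hρ : Greedy P r γ ρ x) (σ : S → A) : Tpol P r γ σ x ≤ Tpol P r γ ρ x := by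
  rw [hρ]
  intro sa
  refine add_le_add_right (mul_le_mul_of_nonneg_left ?_ hγ0) _
  refine sum_le_sum fun s' _ => mul_le_mul_of_nonneg_left ?_ (hP.1 sa s')
  exact le_ciSup (f := fun a => x (s', a)) (Set.finite_range _).bddAbove (σ s')

variable [DecidableEq A]

lemma Pop_eq_mulVec (ρ : S → A) (q : S × A → ℝ) : Pop P ρ q = Pmat P ρ *ᵥ q := by
  funext sa
  simp only [Pop, mulVec, dotProduct, Fintype.sum_prod_type, Pmat]
  exact sum_congr rfl fun s' _ => by simp

lemma Tpol_eq (ρ : S → A) (q : S × A → ℝ) : Tpol P r γ ρ q = r + γ • (Pmat P ρ *ᵥ q) := by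
  funext sa
  simp [Tpol, Pop_eq_mulVec]

lemma Tpol_sub_Tpol (ρ : S → A) (x y : S × A → ℝ) :
    Tpol P r γ ρ x - Tpol P r γ ρ y = γ • (Pmat P ρ *ᵥ (x - y)) := by
  rw [Tpol_eq, Tpol_eq, mulVec_sub, smul_sub, add_sub_add_left_eq_sub]

variable [DecidableEq S]

lemma Pmat_mem_rowStochastic (hP : IsKernel P) (ρ : S → A) :
    Pmat P ρ ∈ rowStochastic ℝ (S × A) := by
  refine mem_rowStochastic_iff_sum.2 ⟨fun sa sa' => ?_, fun sa => ?_⟩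
  · unfold Pmat
    split_ifs
    exacts [hP.1 _ _, le_rfl]
  · rw [← hP.2 sa, Fintype.sum_prod_type]
    exact sum_congr rfl fun s' _ => by simp [Pmat]

lemma Pcomp_of_lt {π : ℕ → S → A} {j i : ℕ} (h : j < i) : Pcomp P π j i = 1 := by
  simp [Pcomp, Nat.sub_eq_zero_of_le h]

lemma Pcomp_succ {π : ℕ → S → A} {j i : ℕ} (h : i ≤ j + 1) :
    Pcomp P π (j + 1) i = Pmat P (π (j + 1)) * Pcomp P π j i := by
  rw [Pcomp, Pcomp, show j + 1 + 1 - i = j + 1 - i + 1 by omega, List.range'_1_concat,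
    show i + (j + 1 - i) = j + 1 by omega]
  simp

lemma sub_eq_Res_mulVec_Tpol_sub (hP : IsKernel P) (hγ0 : 0 ≤ γ) (hγ1 : γ < 1) {ρ : S → A}
    {w : S × A → ℝ} (hw : Tpol P r γ ρ w = w) (x : S × A → ℝ) :
    w - x = Res P γ ρ *ᵥ (Tpol P r γ ρ x - x) := by
  have h : Tpol P r γ ρ x - x = (1 - γ • Pmat P ρ) *ᵥ (w - x) := by
    rw [sub_mulVec, one_mulVec, smul_mulVec, ← Tpol_sub_Tpol (r := r), hw]
    abel
  rw [h, Res, inv_one_sub_smul_mulVec_one_sub_smul_mulVec (Pmat_mem_rowStochastic hP ρ) hγ0 hγ1]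

lemma Res_mulVec_mono (hP : IsKernel P) (hγ0 : 0 ≤ γ) (hγ1 : γ < 1) (ρ : S → A) :
    Monotone (Res P γ ρ *ᵥ ·) :=
  inv_one_sub_smul_mulVec_mono (Pmat_mem_rowStochastic hP ρ) hγ0 hγ1

end Bellman

lemma sum_range_sum_Icc_eq_sum_range_sum_Icc_sub {M : Type*} [AddCommMonoid M] (k : ℕ)
    (g : ℕ → ℕ → M) :
    ∑ t ∈ range (k + 1), ∑ i ∈ Icc 1 t, g t i =
      ∑ j ∈ range k, ∑ i ∈ Icc 1 (k - j), g (i + j) i := by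
  rw [sum_sigma', sum_sigma']
  refine sum_nbij' (fun p => ⟨p.1 - p.2, p.2⟩) (fun p => ⟨p.2 + p.1, p.2⟩) ?_ ?_ ?_ ?_ ?_ <;>
    rintro ⟨a, b⟩ h <;>
    simp only [mem_sigma, mem_range, mem_Icc] at h ⊢
  · omega
  · omega
  · simp only [Sigma.mk.injEq, heq_eq_eq, and_true]; omega
  · simp only [Sigma.mk.injEq, heq_eq_eq, and_true]; omega
  · rw [Nat.add_sub_cancel' h.2.2]

section Duhamel

omit [Nonempty S] [Nonempty A]

variable {P : S × A → S → ℝ} {γ : ℝ} {π : ℕ → S → A}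

-- the solution of `x (t + 1) = γ • P_{π (t + 1)} x t + b (t + 1)`, `x 0 = x₀`
def duhamelSum (P : S × A → S → ℝ) (γ : ℝ) (π : ℕ → S → A) (x₀ : S × A → ℝ)
    (b : ℕ → S × A → ℝ) (t : ℕ) : S × A → ℝ :=
  γ ^ t • (Pcomp P π t 1 *ᵥ x₀) + ∑ i ∈ Icc 1 t, γ ^ (t - i) • (Pcomp P π t (i + 1) *ᵥ b i)

lemma duhamelSum_zero (x₀ : S × A → ℝ) (b : ℕ → S × A → ℝ) : duhamelSum P γ π x₀ b 0 = x₀ := by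
  simp [duhamelSum, Pcomp_of_lt]

lemma duhamelSum_succ (x₀ : S × A → ℝ) (b : ℕ → S × A → ℝ) (t : ℕ) :
    duhamelSum P γ π x₀ b (t + 1) =
      γ • (Pmat P (π (t + 1)) *ᵥ duhamelSum P γ π x₀ b t) + b (t + 1) := by
  have hterm : ∀ i ∈ Icc 1 t, γ ^ (t + 1 - i) • (Pcomp P π (t + 1) (i + 1) *ᵥ b i) =
      γ • (Pmat P (π (t + 1)) *ᵥ (γ ^ (t - i) • (Pcomp P π t (i + 1) *ᵥ b i))) := by
    intro i hi
    rw [mem_Icc] at hi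
    rw [mulVec_smul, mulVec_mulVec, ← Pcomp_succ (by omega), smul_smul, ← pow_succ',
      Nat.sub_add_comm hi.2]
  rw [duhamelSum, duhamelSum, sum_Icc_succ_top (by omega), sum_congr rfl hterm,
    Pcomp_of_lt (j := t + 1) (i := t + 1 + 1) (by omega), Nat.sub_self, pow_zero, one_smul,
    one_mulVec, mulVec_add, mulVec_sum, smul_add, smul_sum, mulVec_smul, mulVec_mulVec,
    ← Pcomp_succ (by omega), smul_smul, ← pow_succ', add_assoc]

lemma duhamelSum_le (hP : IsKernel P) (hγ0 : 0 ≤ γ) {x b : ℕ → S × A → ℝ}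
    (hx : ∀ t, γ • (Pmat P (π (t + 1)) *ᵥ x t) + b (t + 1) ≤ x (t + 1)) (t : ℕ) :
    duhamelSum P γ π (x 0) b t ≤ x t := by
  induction t with
  | zero => rw [duhamelSum_zero]
  | succ t ih =>
    rw [duhamelSum_succ]
    refine le_trans ?_ (hx t)
    gcongr
    exact mulVec_mono_of_mem_rowStochastic (Pmat_mem_rowStochastic hP _) ih

lemma sum_duhamelSum (x₀ : S × A → ℝ) (b : ℕ → S × A → ℝ) (k : ℕ) :
    ∑ t ∈ range (k + 1), duhamelSum P γ π x₀ b t =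
      ∑ j ∈ range (k + 1), γ ^ j • (Pcomp P π j 1 *ᵥ x₀) +
        ∑ j ∈ range k, γ ^ j • ∑ i ∈ Icc 1 (k - j), Pcomp P π (i + j) (i + 1) *ᵥ b i := by
  simp only [duhamelSum, sum_add_distrib, sum_range_sum_Icc_eq_sum_range_sum_Icc_sub,
    Nat.add_sub_cancel_left, smul_sum]

end Duhamel

def residualSum (P : S × A → S → ℝ) (r : S × A → ℝ) (γ : ℝ) (q : ℕ → S × A → ℝ) (ρ : S → A)
    (n : ℕ) : S × A → ℝ :=
  ∑ i ∈ range n, (Tpol P r γ ρ (q i) - q i)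

section MoVI

omit [Fintype S] [Fintype A] [Nonempty S] [Nonempty A] [DecidableEq S] [DecidableEq A]

variable {P : S × A → S → ℝ} {r : S × A → ℝ} {γ : ℝ} {π : ℕ → S → A} {q h ε : ℕ → S × A → ℝ}

lemma Ecum_eq_neg_sum_range (n : ℕ) :
    Ecum ε n = -∑ t ∈ range n, ε (t + 1) := by
  induction n with
  | zero => funext; simp [Ecum]
  | succ n ih =>
    rw [sum_range_succ, neg_add, ← ih]
    funext sa
    simp [Ecum, sum_Icc_succ_top, add_comm]

variable [Fintype S]

@[simp]
lemma residualSum_zero (ρ : S → A) : residualSum P r γ q ρ 0 = 0 := sum_range_zero _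

@[simp]
lemma residualSum_one (ρ : S → A) : residualSum P r γ q ρ 1 = Tpol P r γ ρ (q 0) - q 0 :=
  sum_range_one _

lemma IsMoVI.q_succ (hm : IsMoVI P r γ π q h ε) (t : ℕ) :
    q (t + 1) = Tpol P r γ (π (t + 1)) (q t) + ε (t + 1) :=
  hm.2.2.1 t

lemma IsMoVI.sum_range_q (hm : IsMoVI P r γ π q h ε) (k : ℕ) :
    ∑ i ∈ range (k + 1), q i = ((k : ℝ) + 1) • h k := by
  induction k with
  | zero => simp [hm.1]
  | succ k ih =>
    rw [sum_range_succ, ih, hm.2.2.2 k]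
    funext sa
    simp only [Pi.add_apply, Pi.smul_apply, smul_eq_mul]
    push_cast
    field_simp
    ring

variable [Fintype A]

lemma IsMoVI.residualSum_eq (hm : IsMoVI P r γ π q h ε) (ρ : S → A) (k : ℕ) :
    residualSum P r γ q ρ (k + 1) = ((k : ℝ) + 1) • (Tpol P r γ ρ (h k) - h k) := by
  classical
  simp only [residualSum, Tpol_eq, sum_sub_distrib, sum_add_distrib, ← smul_sum, ← mulVec_sum,
    hm.sum_range_q, sum_const, card_range, mulVec_smul, smul_sub, smul_add, smul_comm γ]
  norm_cast

lemma IsMoVI.residualSum_le (hP : IsKernel P) (hγ0 : 0 ≤ γ) (hm : IsMoVI P r γ π q h ε) :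
    ∀ (n : ℕ) (σ : S → A), residualSum P r γ q σ n ≤ residualSum P r γ q (π n) n
  | 0, _ => by simp
  | k + 1, σ => by
    rw [hm.residualSum_eq, hm.residualSum_eq]
    exact smul_le_smul_of_nonneg_left (sub_le_sub_right ((hm.2.1 k).Tpol_le hP hγ0 σ) _)
      (by positivity)

lemma IsMoVI.residualSum_succ_sub_le (hP : IsKernel P) (hγ0 : 0 ≤ γ)
    (hm : IsMoVI P r γ π q h ε) (t : ℕ) :
    residualSum P r γ q (π (t + 1)) (t + 1) - residualSum P r γ q (π t) t ≤
      Tpol P r γ (π (t + 1)) (q t) - q t := by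
  rw [residualSum, sum_range_succ, ← residualSum, add_sub_right_comm]
  exact add_le_of_nonpos_left (sub_nonpos.2 (hm.residualSum_le hP hγ0 t _))

lemma IsMoVI.le_residualSum_succ_sub (hP : IsKernel P) (hγ0 : 0 ≤ γ)
    (hm : IsMoVI P r γ π q h ε) (t : ℕ) :
    Tpol P r γ (π (t + 1)) (q (t + 1)) - q (t + 1) ≤
      residualSum P r γ q (π (t + 2)) (t + 2) - residualSum P r γ q (π (t + 1)) (t + 1) := by
  have h := hm.residualSum_le hP hγ0 (t + 2) (π (t + 1))
  rw [residualSum, sum_range_succ, ← residualSum] at h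
  exact le_sub_iff_add_le'.2 h

lemma IsMoVI.residualSum_le_Ecum (hP : IsKernel P) (hγ0 : 0 ≤ γ) (hm : IsMoVI P r γ π q h ε)
    (k : ℕ) :
    residualSum P r γ q (π (k + 1)) (k + 1) ≤ Ecum ε (k + 1) + q (k + 1) - q 0 := by
  have hstep : ∀ t, Tpol P r γ (π (t + 1)) (q t) - q t = q (t + 1) - q t - ε (t + 1) :=
    fun t => by rw [hm.q_succ]; abel
  calc residualSum P r γ q (π (k + 1)) (k + 1)
      = ∑ t ∈ range (k + 1),
          (residualSum P r γ q (π (t + 1)) (t + 1) - residualSum P r γ q (π t) t) := by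
        rw [sum_range_sub (fun t => residualSum P r γ q (π t) t), residualSum_zero, sub_zero]
    _ ≤ ∑ t ∈ range (k + 1), (Tpol P r γ (π (t + 1)) (q t) - q t) :=
        sum_le_sum fun t _ => hm.residualSum_succ_sub_le hP hγ0 t
    _ = Ecum ε (k + 1) + q (k + 1) - q 0 := by
        rw [sum_congr rfl fun t _ => hstep t, sum_sub_distrib, sum_range_sub q,
          Ecum_eq_neg_sum_range]
        abel

variable [DecidableEq S] [DecidableEq A]

lemma IsMoVI.Res_mulVec_residualSum (hP : IsKernel P)
    (hγ0 : 0 ≤ γ) (hγ1 : γ < 1) (hm : IsMoVI P r γ π q h ε) {ρ : S → A} {w : S × A → ℝ}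
    (hw : Tpol P r γ ρ w = w) (k : ℕ) :
    Res P γ ρ *ᵥ residualSum P r γ q ρ (k + 1) = ((k : ℝ) + 1) • (w - h k) := by
  rw [hm.residualSum_eq, mulVec_smul, ← sub_eq_Res_mulVec_Tpol_sub hP hγ0 hγ1 hw]

lemma IsMoVI.residualSum_increment_rec (hP : IsKernel P) (hγ0 : 0 ≤ γ)
    (hm : IsMoVI P r γ π q h ε) (t : ℕ) :
    γ • (Pmat P (π (t + 1)) *ᵥ
        (residualSum P r γ q (π (t + 1)) (t + 1) - residualSum P r γ q (π t) t)) +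
      -((1 - γ • Pmat P (π (t + 1))) *ᵥ ε (t + 1)) ≤
    residualSum P r γ q (π (t + 2)) (t + 2) - residualSum P r γ q (π (t + 1)) (t + 1) := by
  have hdiff : residualSum P r γ q (π (t + 1)) (t + 1) - residualSum P r γ q (π t) t +
      ε (t + 1) ≤ q (t + 1) - q t := by
    calc _ ≤ Tpol P r γ (π (t + 1)) (q t) - q t + ε (t + 1) :=
          add_le_add_left (hm.residualSum_succ_sub_le hP hγ0 t) _
      _ = q (t + 1) - q t := by
          rw [hm.q_succ t]
          abel
  calc _ = γ • (Pmat P (π (t + 1)) *ᵥ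
          (residualSum P r γ q (π (t + 1)) (t + 1) - residualSum P r γ q (π t) t +
            ε (t + 1))) - ε (t + 1) := by
        rw [sub_mulVec, one_mulVec, smul_mulVec, mulVec_add, smul_add]
        abel
    _ ≤ γ • (Pmat P (π (t + 1)) *ᵥ (q (t + 1) - q t)) - ε (t + 1) := by
        gcongr
        exact mulVec_mono_of_mem_rowStochastic (Pmat_mem_rowStochastic hP _) hdiff
    _ = Tpol P r γ (π (t + 1)) (q (t + 1)) - q (t + 1) := by
        rw [← Tpol_sub_Tpol (r := r), sub_sub, ← hm.q_succ]
    _ ≤ _ := hm.le_residualSum_succ_sub hP hγ0 t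

lemma IsMoVI.sum_Ew_add_le_residualSum (hP : IsKernel P) (hγ0 : 0 ≤ γ)
    (hm : IsMoVI P r γ π q h ε) (k : ℕ) :
    ∑ j ∈ range k, γ ^ j • Ew P γ π ε k j +
        ∑ j ∈ range (k + 1), γ ^ j • (Pcomp P π j 1 *ᵥ (Tpol P r γ (π 1) (q 0) - q 0)) ≤
      residualSum P r γ q (π (k + 1)) (k + 1) := by
  have hEw : ∀ j, Ew P γ π ε k j = ∑ i ∈ Icc 1 (k - j),
      Pcomp P π (i + j) (i + 1) *ᵥ -((1 - γ • Pmat P (π i)) *ᵥ ε i) := fun j => by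
    funext sa
    simp [Ew, Finset.sum_apply, mulVec_neg]
  calc _ = ∑ t ∈ range (k + 1), duhamelSum P γ π (Tpol P r γ (π 1) (q 0) - q 0)
        (fun i => -((1 - γ • Pmat P (π i)) *ᵥ ε i)) t := by
        rw [sum_duhamelSum, add_comm]
        simp only [hEw]
    _ ≤ ∑ t ∈ range (k + 1),
          (residualSum P r γ q (π (t + 1)) (t + 1) - residualSum P r γ q (π t) t) :=
        sum_le_sum fun t _ => by
          simpa using duhamelSum_le hP hγ0 (π := π)
            (x := fun t => residualSum P r γ q (π (t + 1)) (t + 1) - residualSum P r γ q (π t) t)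
            (b := fun i => -((1 - γ • Pmat P (π i)) *ᵥ ε i))
            (hm.residualSum_increment_rec hP hγ0) t
    _ = residualSum P r γ q (π (k + 1)) (k + 1) := by
        rw [sum_range_sub (fun t => residualSum P r γ q (π t) t), residualSum_zero, sub_zero]

end MoVI

theorem movi_error_propagation_general (P : S × A → S → ℝ) (hP : IsKernel P)
    (r : S × A → ℝ) (γ : ℝ) (hγ0 : 0 < γ) (hγ1 : γ < 1)
    (qpi : (S → A) → S × A → ℝ)
    (hqpi : ∀ π' : S → A, Tpol P r γ π' (qpi π') = qpi π')
    (πstar : S → A)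
    (π : ℕ → S → A) (q h : ℕ → S × A → ℝ) (ε : ℕ → S × A → ℝ)
    (hmovi : IsMoVI P r γ π q h ε) (k : ℕ) :
    ∀ sa : S × A,
      qpi πstar sa - qpi (π (k + 1)) sa ≤
        (1 / (k + 1 : ℝ)) *
          ((Res P γ πstar).mulVec
              (fun sa' => Ecum ε (k + 1) sa' + q (k + 1) sa' - q 0 sa') sa -
            (Res P γ (π (k + 1))).mulVec
              (fun sa' =>
                (∑ j ∈ Finset.range k, γ ^ j * Ew P γ π ε k j sa') +
                  ∑ j ∈ Finset.range (k + 1),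
                    γ ^ j *
                      (Pcomp P π j 1).mulVec
                        (fun sa'' => Tpol P r γ (π 1) (q 0) sa'' - q 0 sa'') sa') sa) := by
  intro sa
  have hγ := hγ0.le
  have hvalue (ρ : S → A) := hmovi.Res_mulVec_residualSum hP hγ hγ1 (hqpi ρ) k
  have hupper := Res_mulVec_mono hP hγ hγ1 πstar
    ((hmovi.residualSum_le hP hγ (k + 1) πstar).trans (hmovi.residualSum_le_Ecum hP hγ k))
  have hlower := Res_mulVec_mono hP hγ hγ1 (π (k + 1))
    (hmovi.sum_Ew_add_le_residualSum hP hγ k)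
  have hlower_eq : (fun sa' => (∑ j ∈ range k, γ ^ j * Ew P γ π ε k j sa') +
      ∑ j ∈ range (k + 1), γ ^ j * (Pcomp P π j 1 *ᵥ (Tpol P r γ (π 1) (q 0) - q 0)) sa') =
      ∑ j ∈ range k, γ ^ j • Ew P γ π ε k j +
        ∑ j ∈ range (k + 1), γ ^ j • (Pcomp P π j 1 *ᵥ (Tpol P r γ (π 1) (q 0) - q 0)) := by
    funext sa'
    simp [Finset.sum_apply]
  calc qpi πstar sa - qpi (π (k + 1)) sa
      = (1 / (k + 1 : ℝ)) * ((((k : ℝ) + 1) • (qpi πstar - h k)) sa -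
          (((k : ℝ) + 1) • (qpi (π (k + 1)) - h k)) sa) := by
        simp only [Pi.smul_apply, Pi.sub_apply, smul_eq_mul]
        field_simp
        ring
    _ ≤ _ := by
        rw [← hvalue, ← hvalue]
        gcongr
        · exact hupper sa
        · exact hlower_eq ▸ hlower sa

/-- Theorem 1 (error propagation for MoVI), componentwise. -/
theorem movi_error_propagation (P : S × A → S → ℝ) (hP : IsKernel P)
    (r : S × A → ℝ) (γ : ℝ) (hγ0 : 0 < γ) (hγ1 : γ < 1)
    (qpi : (S → A) → S × A → ℝ)
    (hqpi : ∀ π' : S → A, Tpol P r γ π' (qpi π') = qpi π')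
    (πstar : S → A) (hopt : ∀ (π' : S → A) (sa : S × A), qpi π' sa ≤ qpi πstar sa)
    (π : ℕ → S → A) (q h : ℕ → S × A → ℝ) (ε : ℕ → S × A → ℝ)
    (hmovi : IsMoVI P r γ π q h ε) (k : ℕ) :
    ∀ sa : S × A,
      qpi πstar sa - qpi (π (k + 1)) sa ≤
        (1 / (k + 1 : ℝ)) *
          ((Res P γ πstar).mulVec
              (fun sa' => Ecum ε (k + 1) sa' + q (k + 1) sa' - q 0 sa') sa -
            (Res P γ (π (k + 1))).mulVec
              (fun sa' =>
                (∑ j ∈ Finset.range k, γ ^ j * Ew P γ π ε k j sa') +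
                  ∑ j ∈ Finset.range (k + 1),
                    γ ^ j *
                      (Pcomp P π j 1).mulVec
                        (fun sa'' => Tpol P r γ (π 1) (q 0) sa'' - q 0 sa'') sa') sa) :=
  movi_error_propagation_general P hP r γ hγ0 hγ1 qpi hqpi πstar π q h ε hmovi k

end MoVIFormal
end
end

section
/- Upper bound on the MoVI residual. For every k ≥ 0, the MoVI iterates satisfy, componentwise, T_{π_{k+1}} h_k − h_k ≤ (1/(k+1)) ( q_{k+1} − q_0 + E_{k+1} ). -/
open Finset MeasureTheory
open scoped MeasureTheory

noncomputable section

namespace MoVIFormal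

variable {S A : Type} [Fintype S] [Fintype A] [Nonempty S] [Nonempty A]
  [DecidableEq S] [DecidableEq A]

/-!
The residual `q ↦ T_π q - q` is affine and `h (k+1)` is the convex combination
`((k+1) h k + q (k+1)) / (k+2)`, so `(k+2)` times the residual of `h (k+1)` under `π (k+2)`
is `(k+1)` times that of `h k` plus
`T_{π (k+2)} q (k+1) - q (k+1) = q (k+2) - q (k+1) - ε (k+2)`.
Since `π (k+1)` is greedy for `h k`, the first term is at most `(k+1)` times the residual of `h k`
under `π (k+1)`, and induction on `k` telescopes the second.
-/

section

omit [Nonempty S] [Nonempty A] [DecidableEq S] [DecidableEq A]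

variable {P : S × A → S → ℝ} {r : S × A → ℝ} {γ : ℝ}

omit [Fintype A] in
theorem Pop_lincomb (π : S → A) (a b : ℝ) (u v : S × A → ℝ) (sa : S × A) :
    Pop P π (fun x => a * u x + b * v x) sa = a * Pop P π u sa + b * Pop P π v sa := by
  simp only [Pop, Finset.mul_sum, ← Finset.sum_add_distrib]
  exact Finset.sum_congr rfl fun _ _ => by ring

omit [Fintype A] in
theorem Tpol_affine_comb (π : S → A) {a b : ℝ} (hab : a + b = 1) (u v : S × A → ℝ)
    (sa : S × A) :
    Tpol P r γ π (fun x => a * u x + b * v x) sa =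
      a * Tpol P r γ π u sa + b * Tpol P r γ π v sa := by
  simp only [Tpol, Pop_lincomb]
  linear_combination (-r sa) * hab

theorem Tpol_le_Topt (hP : ∀ sa s', 0 ≤ P sa s') (hγ : 0 ≤ γ) (π : S → A)
    (q : S × A → ℝ) (sa : S × A) : Tpol P r γ π q sa ≤ Topt P r γ q sa := by
  have hPq : Pop P π q sa ≤ ∑ s', P sa s' * ⨆ a', q (s', a') :=
    Finset.sum_le_sum fun s' _ => mul_le_mul_of_nonneg_left
      (le_ciSup (f := fun a' => q (s', a')) (Set.finite_range _).bddAbove (π s')) (hP sa s')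
  simp only [Tpol, Topt]
  gcongr

theorem Greedy.Tpol_le_s6 (hP : ∀ sa s', 0 ≤ P sa s') (hγ : 0 ≤ γ) {π : S → A}
    {q : S × A → ℝ} (hπ : Greedy P r γ π q) (π' : S → A) (sa : S × A) :
    Tpol P r γ π' q sa ≤ Tpol P r γ π q sa :=
  hπ ▸ Tpol_le_Topt hP hγ π' q sa

omit [Fintype S] [Fintype A] in
theorem Ecum_succ (ε : ℕ → S × A → ℝ) (k : ℕ) (sa : S × A) :
    Ecum ε (k + 1) sa = Ecum ε k sa - ε (k + 1) sa := by
  simp only [Ecum, Finset.sum_Icc_succ_top (Nat.le_add_left 1 k)]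
  ring

variable {π : ℕ → S → A} {q h ε : ℕ → S × A → ℝ}

omit [Fintype A] in
theorem IsMoVI.Tpol_q (hm : IsMoVI P r γ π q h ε) (k : ℕ) (sa : S × A) :
    Tpol P r γ (π (k + 1)) (q k) sa = q (k + 1) sa - ε (k + 1) sa := by
  rw [hm.2.2.1 k]
  ring

omit [Fintype A] in
theorem IsMoVI.h_succ_eq (hm : IsMoVI P r γ π q h ε) (k : ℕ) :
    h (k + 1) = fun sa =>
      ((k + 1) / (k + 2) : ℝ) * h k sa + (1 / (k + 2) : ℝ) * q (k + 1) sa := by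
  rw [hm.2.2.2 k]
  ext sa
  field_simp

omit [Fintype A] in
theorem IsMoVI.scaled_residual_succ (hm : IsMoVI P r γ π q h ε) (π' : S → A) (k : ℕ)
    (sa : S × A) :
    ((k : ℝ) + 2) * (Tpol P r γ π' (h (k + 1)) sa - h (k + 1) sa) =
      ((k : ℝ) + 1) * (Tpol P r γ π' (h k) sa - h k sa) +
        (Tpol P r γ π' (q (k + 1)) sa - q (k + 1) sa) := by
  have hk : ((k : ℝ) + 2) ≠ 0 := by positivity
  rw [hm.h_succ_eq k, Tpol_affine_comb π' (by field_simp; ring)]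
  field_simp
  ring

theorem IsMoVI.scaled_residual_le (hP : ∀ sa s', 0 ≤ P sa s') (hγ : 0 ≤ γ)
    (hm : IsMoVI P r γ π q h ε) (k : ℕ) (sa : S × A) :
    ((k : ℝ) + 1) * (Tpol P r γ (π (k + 1)) (h k) sa - h k sa) ≤
      q (k + 1) sa - q 0 sa + Ecum ε (k + 1) sa := by
  induction k generalizing sa with
  | zero =>
    simp only [Nat.cast_zero, zero_add, one_mul, hm.1, hm.Tpol_q, Ecum, Finset.Icc_self,
      Finset.sum_singleton]
    exact le_of_eq (by ring)
  | succ k ih =>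
    have hgreedy := (hm.2.1 k).Tpol_le_s6 hP hγ (π (k + 2)) sa
    calc ((k + 1 : ℕ) + 1 : ℝ) * (Tpol P r γ (π (k + 2)) (h (k + 1)) sa - h (k + 1) sa)
        = ((k : ℝ) + 1) * (Tpol P r γ (π (k + 2)) (h k) sa - h k sa) +
            (q (k + 2) sa - ε (k + 2) sa - q (k + 1) sa) := by
          rw [← hm.Tpol_q, ← hm.scaled_residual_succ]
          push_cast
          ring
      _ ≤ ((k : ℝ) + 1) * (Tpol P r γ (π (k + 1)) (h k) sa - h k sa) +
            (q (k + 2) sa - ε (k + 2) sa - q (k + 1) sa) := by gcongr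
      _ ≤ q (k + 2) sa - q 0 sa + Ecum ε (k + 2) sa := by
          rw [Ecum_succ]
          linarith [ih sa]

end

theorem movi_residual_upper_bound_general (P : S × A → S → ℝ) (hP : IsKernel P)
    (r : S × A → ℝ) (γ : ℝ) (hγ0 : 0 < γ)
    (π : ℕ → S → A) (q h : ℕ → S × A → ℝ) (ε : ℕ → S × A → ℝ)
    (hmovi : IsMoVI P r γ π q h ε) (k : ℕ) :
    ∀ sa : S × A,
      Tpol P r γ (π (k + 1)) (h k) sa - h k sa ≤
        (1 / (k + 1 : ℝ)) * (q (k + 1) sa - q 0 sa + Ecum ε (k + 1) sa) := by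
  intro sa
  rw [one_div_mul_eq_div, le_div_iff₀ (by positivity), mul_comm]
  exact hmovi.scaled_residual_le hP.1 hγ0.le k sa

/-- Upper bound on the MoVI residual. -/
theorem movi_residual_upper_bound (P : S × A → S → ℝ) (hP : IsKernel P)
    (r : S × A → ℝ) (γ : ℝ) (hγ0 : 0 < γ) (hγ1 : γ < 1)
    (π : ℕ → S → A) (q h : ℕ → S × A → ℝ) (ε : ℕ → S × A → ℝ)
    (hmovi : IsMoVI P r γ π q h ε) (k : ℕ) :
    ∀ sa : S × A,
      Tpol P r γ (π (k + 1)) (h k) sa - h k sa ≤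
        (1 / (k + 1 : ℝ)) * (q (k + 1) sa - q 0 sa + Ecum ε (k + 1) sa) :=
  movi_residual_upper_bound_general P hP r γ hγ0 π q h ε hmovi k

end MoVIFormal
end
end

section
/- Lower bound on the MoVI residual. For every k ≥ 0, the MoVI iterates satisfy, componentwise, T_{π_{k+1}} h_k − h_k ≥ (1/(k+1)) ( Σ_{j=0}^{k} γ^j P_{j:1} (T_{π_1} q_0 − q_0) + Σ_{j=0}^{k−1} γ^j E'_{k,j} ). -/
open Finset MeasureTheory
open scoped MeasureTheory

noncomputable section

namespace MoVIFormal

variable {S A : Type} [Fintype S] [Fintype A] [Nonempty S] [Nonempty A]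
  [DecidableEq S] [DecidableEq A]

/-! Write `R_π q = T_π q - q` for the Bellman residual, which is affine in `q`. Since
`(k + 1) h_k = ∑_{m ≤ k} q_m`, the increments of `b_k = (k + 1) R_{π_{k+1}} h_k` are governed by
the residuals of the `q_m`: greediness of `π_{m+1}` for `h_m` and of `π_{m+2}` for `h_{m+1}` gives
`R_{π_{m+1}} q_{m+1} ≤ b_{m+1} - b_m ≤ R_{π_{m+2}} q_{m+1}`. As
`R_π (T_π q + ε) = γ P_π R_π q - (I - γ P_π) ε` and `P_π` is monotone, the sequence
`D_0 = R_{π_1} q_0`, `D_{m+1} = γ P_{π_{m+1}} D_m - (I - γ P_{π_{m+1}}) ε_{m+1}` then satisfies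
`D_m ≤ R_{π_{m+1}} q_m` and `D_{m+1} ≤ b_{m+1} - b_m` by induction, so `∑_{m ≤ k} D_m ≤ b_k`.
Unrolling the recursion for `D_m` and regrouping by `j = m - i` turns `∑_{m ≤ k} D_m` into the
sum of the statement. -/

section

omit [Nonempty S] [Nonempty A]

open Matrix

variable {P : S × A → S → ℝ} {r : S × A → ℝ} {γ : ℝ}

def residual (P : S × A → S → ℝ) (r : S × A → ℝ) (γ : ℝ) (π : S → A) (q : S × A → ℝ) :
    S × A → ℝ :=
  Tpol P r γ π q - q

omit [DecidableEq S] in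
theorem pop_eq_mulVec (P : S × A → S → ℝ) (π : S → A) (q : S × A → ℝ) :
    Pop P π q = Pmat P π *ᵥ q := by
  funext sa
  simp only [Pop, Pmat, mulVec, dotProduct, Fintype.sum_prod_type, ite_mul, zero_mul,
    sum_ite_eq', mem_univ, if_true]

omit [DecidableEq S] in
theorem tpol_eq (P : S × A → S → ℝ) (r : S × A → ℝ) (γ : ℝ) (π : S → A) (q : S × A → ℝ) :
    Tpol P r γ π q = r + γ • (Pmat P π *ᵥ q) := by
  rw [← pop_eq_mulVec]
  rfl

theorem residual_eq (P : S × A → S → ℝ) (r : S × A → ℝ) (γ : ℝ) (π : S → A)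
    (q : S × A → ℝ) : residual P r γ π q = r - (1 - γ • Pmat P π) *ᵥ q := by
  rw [residual, tpol_eq, sub_mulVec, one_mulVec, smul_mulVec]
  abel

theorem residual_affine (π : S → A) {a b : ℝ} (hab : a - b = 1) (x y : S × A → ℝ) :
    residual P r γ π (a • x - b • y) = a • residual P r γ π x - b • residual P r γ π y := by
  obtain rfl : a = b + 1 := by linarith
  simp only [residual_eq, mulVec_sub, mulVec_smul]
  module

theorem residual_tpol_add (π : S → A) (q ε : S × A → ℝ) :
    residual P r γ π (Tpol P r γ π q + ε)
      = γ • (Pmat P π *ᵥ residual P r γ π q) - (1 - γ • Pmat P π) *ᵥ ε := by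
  simp only [residual_eq, tpol_eq, sub_mulVec, one_mulVec, smul_mulVec, mulVec_add, mulVec_sub,
    mulVec_smul]
  module

omit [Fintype S] [Fintype A] [DecidableEq S] in
theorem pmat_nonneg (hP : ∀ sa s', 0 ≤ P sa s') (π : S → A) (sa sa' : S × A) :
    0 ≤ Pmat P π sa sa' := by
  unfold Pmat
  split_ifs
  exacts [hP _ _, le_rfl]

theorem mulVec_mono {ι : Type*} [Fintype ι] {M : Matrix ι ι ℝ} (hM : ∀ i j, 0 ≤ M i j)
    {u v : ι → ℝ} (huv : u ≤ v) : M *ᵥ u ≤ M *ᵥ v :=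
  fun i => dotProduct_le_dotProduct_of_nonneg_left huv (hM i)

omit [DecidableEq S] [DecidableEq A] in
theorem residual_le_of_greedy (hP : ∀ sa s', 0 ≤ P sa s') (hγ : 0 ≤ γ) {π : S → A}
    {q : S × A → ℝ} (hg : Greedy P r γ π q) (π' : S → A) :
    residual P r γ π' q ≤ residual P r γ π q := by
  refine sub_le_sub_right (fun sa => ?_) q
  rw [hg]
  simp only [Tpol, Topt, Pop]
  gcongr with s' _
  · exact hP sa s'
  · exact le_ciSup (f := fun a' => q (s', a')) (Set.finite_range _).bddAbove (π' s')

theorem pcomp_of_lt (π : ℕ → S → A) {j i : ℕ} (h : j < i) : Pcomp P π j i = 1 := by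
  simp [Pcomp, Nat.sub_eq_zero_of_le h]

theorem pcomp_succ (π : ℕ → S → A) {j i : ℕ} (h : i ≤ j + 1) :
    Pcomp P π (j + 1) i = Pmat P (π (j + 1)) * Pcomp P π j i := by
  rw [Pcomp, show j + 1 + 1 - i = (j + 1 - i) + 1 by omega, List.range'_1_concat,
    show i + (j + 1 - i) = j + 1 by omega]
  simp [Pcomp]

variable {π : ℕ → S → A}

def residualBound (P : S × A → S → ℝ) (γ : ℝ) (π : ℕ → S → A) (c : S × A → ℝ)
    (ε : ℕ → S × A → ℝ) : ℕ → S × A → ℝ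
  | 0 => c
  | m + 1 => γ • (Pmat P (π (m + 1)) *ᵥ residualBound P γ π c ε m)
      - (1 - γ • Pmat P (π (m + 1))) *ᵥ ε (m + 1)

theorem residualBound_eq (c : S × A → ℝ) (ε : ℕ → S × A → ℝ) (m : ℕ) :
    residualBound P γ π c ε m = γ ^ m • (Pcomp P π m 1 *ᵥ c)
      - ∑ i ∈ Icc 1 m, γ ^ (m - i) • (Pcomp P π m (i + 1) *ᵥ (1 - γ • Pmat P (π i)) *ᵥ ε i) := by
  induction m with
  | zero => simp [residualBound, pcomp_of_lt]
  | succ m ih =>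
    have hsum : ∑ i ∈ Icc 1 m, γ ^ (m + 1 - i) • (Pcomp P π (m + 1) (i + 1) *ᵥ
          (1 - γ • Pmat P (π i)) *ᵥ ε i)
        = γ • (Pmat P (π (m + 1)) *ᵥ
          ∑ i ∈ Icc 1 m, γ ^ (m - i) • (Pcomp P π m (i + 1) *ᵥ (1 - γ • Pmat P (π i)) *ᵥ ε i)) := by
      rw [mulVec_sum, smul_sum]
      refine sum_congr rfl fun i hi => ?_
      have hi := mem_Icc.1 hi
      rw [pcomp_succ π (by omega), ← mulVec_mulVec, mulVec_smul, smul_smul, ← pow_succ',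
        Nat.sub_add_comm hi.2]
    rw [residualBound, ih, sum_Icc_succ_top (by omega), hsum,
      pcomp_of_lt π (by omega : m + 1 < m + 1 + 1), pcomp_succ π (by omega : 1 ≤ m + 1),
      Nat.sub_self, pow_zero, one_smul, one_mulVec, mulVec_sub, mulVec_smul, ← mulVec_mulVec,
      smul_sub, smul_smul, ← pow_succ']
    abel

theorem sum_range_sum_Icc_add {M : Type*} [AddCommMonoid M] (f : ℕ → ℕ → M) (k : ℕ) :
    ∑ j ∈ range k, ∑ i ∈ Icc 1 (k - j), f (i + j) i
      = ∑ m ∈ range (k + 1), ∑ i ∈ Icc 1 m, f m i := by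
  rw [sum_sigma', sum_sigma']
  refine sum_nbij' (fun p => ⟨p.2 + p.1, p.2⟩) (fun p => ⟨p.1 - p.2, p.2⟩) ?_ ?_ ?_ ?_ ?_ <;>
    rintro ⟨a, b⟩ hab <;>
    simp only [mem_sigma, mem_range, mem_Icc, Sigma.mk.injEq, heq_eq_eq, and_true] at hab ⊢ <;>
    omega

theorem ew_eq (P : S × A → S → ℝ) (γ : ℝ) (π : ℕ → S → A) (ε : ℕ → S × A → ℝ) (k j : ℕ) :
    Ew P γ π ε k j
      = -∑ i ∈ Icc 1 (k - j), Pcomp P π (i + j) (i + 1) *ᵥ (1 - γ • Pmat P (π i)) *ᵥ ε i := by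
  funext sa
  simp [Ew, Finset.sum_apply]

theorem sum_residualBound (c : S × A → ℝ) (ε : ℕ → S × A → ℝ) (k : ℕ) :
    ∑ m ∈ range (k + 1), residualBound P γ π c ε m
      = ∑ j ∈ range (k + 1), γ ^ j • (Pcomp P π j 1 *ᵥ c)
        + ∑ j ∈ range k, γ ^ j • Ew P γ π ε k j := by
  rw [sum_congr rfl fun m _ => residualBound_eq c ε m, sum_sub_distrib,
    ← sum_range_sum_Icc_add (fun m i => γ ^ (m - i) • (Pcomp P π m (i + 1) *ᵥ
      (1 - γ • Pmat P (π i)) *ᵥ ε i)) k]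
  simp only [ew_eq, smul_neg, smul_sum, sum_neg_distrib, Nat.add_sub_cancel_left, sub_eq_add_neg]

variable {q h ε : ℕ → S × A → ℝ}

def scaledResidual (P : S × A → S → ℝ) (r : S × A → ℝ) (γ : ℝ) (π : ℕ → S → A)
    (h : ℕ → S × A → ℝ) (m : ℕ) : S × A → ℝ :=
  ((m : ℝ) + 1) • residual P r γ (π (m + 1)) (h m)

namespace IsMoVI

omit [Fintype A] [DecidableEq S] [DecidableEq A] in
theorem q_succ_eq (hmovi : IsMoVI P r γ π q h ε) (m : ℕ) :
    q (m + 1) = ((m : ℝ) + 2) • h (m + 1) - ((m : ℝ) + 1) • h m := by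
  have h2 : (m : ℝ) + 2 ≠ 0 := by positivity
  funext sa
  simp only [hmovi.2.2.2 m, Pi.sub_apply, Pi.smul_apply, smul_eq_mul]
  field_simp
  ring

theorem residual_q_succ (hmovi : IsMoVI P r γ π q h ε) (π' : S → A) (m : ℕ) :
    residual P r γ π' (q (m + 1))
      = ((m : ℝ) + 2) • residual P r γ π' (h (m + 1))
        - ((m : ℝ) + 1) • residual P r γ π' (h m) := by
  rw [hmovi.q_succ_eq m, residual_affine π' (by ring)]

theorem residual_q_succ_le (hP : ∀ sa s', 0 ≤ P sa s') (hγ : 0 ≤ γ)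
    (hmovi : IsMoVI P r γ π q h ε) (m : ℕ) :
    residual P r γ (π (m + 1)) (q (m + 1))
      ≤ scaledResidual P r γ π h (m + 1) - scaledResidual P r γ π h m := by
  rw [hmovi.residual_q_succ, scaledResidual, scaledResidual,
    show ((m + 1 : ℕ) : ℝ) + 1 = (m : ℝ) + 2 by push_cast; ring]
  gcongr
  exact residual_le_of_greedy hP hγ (hmovi.2.1 (m + 1)) _

theorem scaledResidual_sub_le (hP : ∀ sa s', 0 ≤ P sa s') (hγ : 0 ≤ γ)
    (hmovi : IsMoVI P r γ π q h ε) (m : ℕ) :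
    scaledResidual P r γ π h (m + 1) - scaledResidual P r γ π h m
      ≤ residual P r γ (π (m + 2)) (q (m + 1)) := by
  rw [hmovi.residual_q_succ, scaledResidual, scaledResidual,
    show ((m + 1 : ℕ) : ℝ) + 1 = (m : ℝ) + 2 by push_cast; ring]
  gcongr
  exact residual_le_of_greedy hP hγ (hmovi.2.1 m) _

theorem residualBound_succ_le (hP : ∀ sa s', 0 ≤ P sa s') (hγ : 0 ≤ γ)
    (hmovi : IsMoVI P r γ π q h ε) {m : ℕ}
    (hm : residualBound P γ π (residual P r γ (π 1) (q 0)) ε m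
      ≤ residual P r γ (π (m + 1)) (q m)) :
    residualBound P γ π (residual P r γ (π 1) (q 0)) ε (m + 1)
      ≤ scaledResidual P r γ π h (m + 1) - scaledResidual P r γ π h m :=
  calc residualBound P γ π (residual P r γ (π 1) (q 0)) ε (m + 1)
      ≤ γ • (Pmat P (π (m + 1)) *ᵥ residual P r γ (π (m + 1)) (q m))
          - (1 - γ • Pmat P (π (m + 1))) *ᵥ ε (m + 1) := by
        rw [residualBound]
        gcongr
        exact mulVec_mono (pmat_nonneg hP _) hm
    _ = residual P r γ (π (m + 1)) (q (m + 1)) := by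
        rw [show q (m + 1) = Tpol P r γ (π (m + 1)) (q m) + ε (m + 1) from hmovi.2.2.1 m,
          residual_tpol_add]
    _ ≤ _ := hmovi.residual_q_succ_le hP hγ m

theorem residualBound_le_residual (hP : ∀ sa s', 0 ≤ P sa s') (hγ : 0 ≤ γ)
    (hmovi : IsMoVI P r γ π q h ε) (m : ℕ) :
    residualBound P γ π (residual P r γ (π 1) (q 0)) ε m ≤ residual P r γ (π (m + 1)) (q m) := by
  induction m with
  | zero => rfl
  | succ m ih =>
    exact (hmovi.residualBound_succ_le hP hγ ih).trans (hmovi.scaledResidual_sub_le hP hγ m)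

theorem sum_residualBound_le (hP : ∀ sa s', 0 ≤ P sa s') (hγ : 0 ≤ γ)
    (hmovi : IsMoVI P r γ π q h ε) (k : ℕ) :
    ∑ m ∈ range (k + 1), residualBound P γ π (residual P r γ (π 1) (q 0)) ε m
      ≤ scaledResidual P r γ π h k := by
  induction k with
  | zero => simp [scaledResidual, residualBound, hmovi.1]
  | succ k ih =>
    rw [sum_range_succ]
    exact (add_le_add_left ih _).trans <| le_sub_iff_add_le'.1 <|
      hmovi.residualBound_succ_le hP hγ (hmovi.residualBound_le_residual hP hγ k)

end IsMoVI

end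

theorem movi_residual_lower_bound_general (P : S × A → S → ℝ) (hP : IsKernel P)
    (r : S × A → ℝ) (γ : ℝ) (hγ0 : 0 < γ)
    (π : ℕ → S → A) (q h : ℕ → S × A → ℝ) (ε : ℕ → S × A → ℝ)
    (hmovi : IsMoVI P r γ π q h ε) (k : ℕ) :
    ∀ sa : S × A,
      (1 / (k + 1 : ℝ)) *
          ((∑ j ∈ Finset.range (k + 1),
              γ ^ j *
                (Pcomp P π j 1).mulVec
                  (fun sa' => Tpol P r γ (π 1) (q 0) sa' - q 0 sa') sa) +
            ∑ j ∈ Finset.range k, γ ^ j * Ew P γ π ε k j sa) ≤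
        Tpol P r γ (π (k + 1)) (h k) sa - h k sa := by
  intro sa
  have hle := hmovi.sum_residualBound_le hP.1 hγ0.le k sa
  rw [sum_residualBound] at hle
  simp only [Pi.add_apply, Finset.sum_apply, Pi.smul_apply, smul_eq_mul, scaledResidual,
    residual, Pi.sub_apply] at hle
  rw [one_div, inv_mul_le_iff₀ (by positivity)]
  exact hle

/-- Lower bound on the MoVI residual. -/
theorem movi_residual_lower_bound (P : S × A → S → ℝ) (hP : IsKernel P)
    (r : S × A → ℝ) (γ : ℝ) (hγ0 : 0 < γ) (hγ1 : γ < 1)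
    (π : ℕ → S → A) (q h : ℕ → S × A → ℝ) (ε : ℕ → S × A → ℝ)
    (hmovi : IsMoVI P r γ π q h ε) (k : ℕ) :
    ∀ sa : S × A,
      (1 / (k + 1 : ℝ)) *
          ((∑ j ∈ Finset.range (k + 1),
              γ ^ j *
                (Pcomp P π j 1).mulVec
                  (fun sa' => Tpol P r γ (π 1) (q 0) sa' - q 0 sa') sa) +
            ∑ j ∈ Finset.range k, γ ^ j * Ew P γ π ε k j sa) ≤
        Tpol P r γ (π (k + 1)) (h k) sa - h k sa :=
  movi_residual_lower_bound_general P hP r γ hγ0 π q h ε hmovi k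

end MoVIFormal
end
end

section
/- Telescoped lower bound on the MoVI Bellman image. For every k ≥ 0, the MoVI iterates satisfy, componentwise, (k+1) T_{π_{k+1}} h_k ≥ Σ_{j=1}^{k} T_{π_j} q_j + T_{π_1} q_0. -/
/-!
Greediness of `π_{k+2}` with respect to `h_{k+1}` gives
`T_{π_{k+1}} h_{k+1} ≤ T_{π_{k+2}} h_{k+1}`, and since `T_π` is affine and `h_{k+1}` is the
running average `((k+1) h_k + q_{k+1}) / (k+2)`, we have
`(k+2) T_{π_{k+1}} h_{k+1} = (k+1) T_{π_{k+1}} h_k + T_{π_{k+1}} q_{k+1}`.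
The resulting one-step inequalities telescope.
-/

open Finset MeasureTheory
open scoped MeasureTheory

noncomputable section

namespace MoVIFormal

variable {S A : Type} [Fintype S] [Fintype A] [Nonempty S] [Nonempty A]
  [DecidableEq S] [DecidableEq A]

section

omit [Nonempty S] [Nonempty A] [DecidableEq S] [DecidableEq A]

section

omit [Fintype A]

theorem pop_const_mul_add (P : S × A → S → ℝ) (π : S → A) (c : ℝ) (f g : S × A → ℝ) (sa : S × A) :
    Pop P π (fun sa => c * f sa + g sa) sa = c * Pop P π f sa + Pop P π g sa := by
  simp only [Pop, Finset.mul_sum, ← Finset.sum_add_distrib]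
  exact Finset.sum_congr rfl fun _ _ => by ring

theorem pop_div (P : S × A → S → ℝ) (π : S → A) (f : S × A → ℝ) (d : ℝ) (sa : S × A) :
    Pop P π (fun sa => f sa / d) sa = Pop P π f sa / d := by
  simp only [Pop, Finset.sum_div, mul_div_assoc]

theorem tpol_running_average (P : S × A → S → ℝ) (r : S × A → ℝ) (γ : ℝ) (π : S → A)
    (f g : S × A → ℝ) {c d : ℝ} (hcd : c + 1 = d) (hd : d ≠ 0) (sa : S × A) :
    d * Tpol P r γ π (fun sa => (c * f sa + g sa) / d) sa =
      c * Tpol P r γ π f sa + Tpol P r γ π g sa := by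
  subst hcd
  simp only [Tpol, pop_div, pop_const_mul_add]
  field_simp
  ring

end

theorem tpol_le_topt {P : S × A → S → ℝ} (hP : ∀ sa s', 0 ≤ P sa s') (r : S × A → ℝ)
    {γ : ℝ} (hγ : 0 ≤ γ) (π : S → A) (q : S × A → ℝ) (sa : S × A) :
    Tpol P r γ π q sa ≤ Topt P r γ q sa := by
  unfold Tpol Topt Pop
  gcongr with s' _
  · exact hP sa s'
  · exact le_ciSup (f := fun a => q (s', a)) (Set.finite_range _).bddAbove (π s')

theorem Greedy.tpol_le {P : S × A → S → ℝ} (hP : ∀ sa s', 0 ≤ P sa s') {r : S × A → ℝ}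
    {γ : ℝ} (hγ : 0 ≤ γ) {π' : S → A} {q : S × A → ℝ} (hgreedy : Greedy P r γ π' q)
    (π : S → A) (sa : S × A) :
    Tpol P r γ π q sa ≤ Tpol P r γ π' q sa := by
  rw [hgreedy]
  exact tpol_le_topt hP r hγ π q sa

theorem IsMoVI.tpol_step {P : S × A → S → ℝ} (hP : ∀ sa s', 0 ≤ P sa s') {r : S × A → ℝ}
    {γ : ℝ} (hγ : 0 ≤ γ) {π : ℕ → S → A} {q h ε : ℕ → S × A → ℝ}
    (hmovi : IsMoVI P r γ π q h ε) (k : ℕ) (sa : S × A) :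
    (k + 1 : ℝ) * Tpol P r γ (π (k + 1)) (h k) sa + Tpol P r γ (π (k + 1)) (q (k + 1)) sa ≤
      (k + 2 : ℝ) * Tpol P r γ (π (k + 2)) (h (k + 1)) sa := by
  obtain ⟨-, hgreedy, -, haverage⟩ := hmovi
  calc (k + 1 : ℝ) * Tpol P r γ (π (k + 1)) (h k) sa + Tpol P r γ (π (k + 1)) (q (k + 1)) sa
      = (k + 2 : ℝ) * Tpol P r γ (π (k + 1)) (h (k + 1)) sa := by
        rw [haverage k, tpol_running_average P r γ _ _ _ (by ring) (by positivity)]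
    _ ≤ (k + 2 : ℝ) * Tpol P r γ (π (k + 2)) (h (k + 1)) sa := by
        gcongr
        exact (hgreedy (k + 1)).tpol_le hP hγ _ sa

end

theorem movi_bellman_image_lower_bound_general (P : S × A → S → ℝ) (hP : IsKernel P)
    (r : S × A → ℝ) (γ : ℝ) (hγ0 : 0 < γ)
    (π : ℕ → S → A) (q h : ℕ → S × A → ℝ) (ε : ℕ → S × A → ℝ)
    (hmovi : IsMoVI P r γ π q h ε) (k : ℕ) :
    ∀ sa : S × A,
      (∑ j ∈ Finset.Icc 1 k, Tpol P r γ (π j) (q j) sa) + Tpol P r γ (π 1) (q 0) sa ≤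
        (k + 1 : ℝ) * Tpol P r γ (π (k + 1)) (h k) sa := by
  intro sa
  induction k with
  | zero => simp [hmovi.1]
  | succ k ih =>
    rw [Finset.sum_Icc_succ_top (Nat.le_add_left 1 k)]
    have hstep := hmovi.tpol_step hP.1 hγ0.le k sa
    push_cast
    linarith

/-- Telescoped lower bound on the MoVI Bellman image. -/
theorem movi_bellman_image_lower_bound (P : S × A → S → ℝ) (hP : IsKernel P)
    (r : S × A → ℝ) (γ : ℝ) (hγ0 : 0 < γ) (hγ1 : γ < 1)
    (π : ℕ → S → A) (q h : ℕ → S × A → ℝ) (ε : ℕ → S × A → ℝ)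
    (hmovi : IsMoVI P r γ π q h ε) (k : ℕ) :
    ∀ sa : S × A,
      (∑ j ∈ Finset.Icc 1 k, Tpol P r γ (π j) (q j) sa) + Tpol P r γ (π 1) (q 0) sa ≤
        (k + 1 : ℝ) * Tpol P r γ (π (k + 1)) (h k) sa :=
  movi_bellman_image_lower_bound_general P hP r γ hγ0 π q h ε hmovi k

end MoVIFormal
end
end

section
/- One-step residual recursion for MoVI. For every j ≥ 1, the MoVI iterates satisfy the exact identity T_{π_j} q_j − q_j = γ P_{π_j} (T_{π_j} q_{j−1} − q_{j−1}) − (I − γ P_{π_j}) ε_j. -/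
open Finset MeasureTheory
open scoped MeasureTheory

noncomputable section

/-! `T_π` is affine with linear part `γ P_π`, so if `q' = T_π q + e` then
`T_π q' - q' = γ P_π (q' - q) - e`, and `q' - q = (T_π q - q) + e`. -/

namespace MoVIFormal

section

variable {S A : Type} [Fintype S]

theorem Pop_add (P : S × A → S → ℝ) (π : S → A) (f g : S × A → ℝ) :
    Pop P π (f + g) = Pop P π f + Pop P π g := by
  funext sa
  simp only [Pop, Pi.add_apply, mul_add, sum_add_distrib]

theorem Pop_sub (P : S × A → S → ℝ) (π : S → A) (f g : S × A → ℝ) :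
    Pop P π (f - g) = Pop P π f - Pop P π g := by
  funext sa
  simp only [Pop, Pi.sub_apply, mul_sub, sum_sub_distrib]

theorem Tpol_sub_Tpol_s10 (P : S × A → S → ℝ) (r : S × A → ℝ) (γ : ℝ) (π : S → A)
    (f g : S × A → ℝ) : Tpol P r γ π f - Tpol P r γ π g = γ • Pop P π (f - g) := by
  funext sa
  simp only [Tpol, Pop_sub, Pi.sub_apply, Pi.smul_apply, smul_eq_mul]
  ring

variable [Fintype A] [DecidableEq A]

theorem Pmat_mulVec (P : S × A → S → ℝ) (π : S → A) (v : S × A → ℝ) :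
    (Pmat P π).mulVec v = Pop P π v := by
  funext sa
  simp only [Matrix.mulVec, dotProduct, Pmat, Pop, Fintype.sum_prod_type, ite_mul, zero_mul,
    sum_ite_eq', mem_univ, if_true]

variable [DecidableEq S]

theorem one_sub_smul_Pmat_mulVec (P : S × A → S → ℝ) (γ : ℝ) (π : S → A) (v : S × A → ℝ) :
    (1 - γ • Pmat P π).mulVec v = v - γ • Pop P π v := by
  rw [Matrix.sub_mulVec, Matrix.smul_mulVec, Matrix.one_mulVec, Pmat_mulVec]

theorem Tpol_sub_self_of_eq_Tpol_add (P : S × A → S → ℝ) (r : S × A → ℝ) (γ : ℝ)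
    (π : S → A) (q q' e : S × A → ℝ) (hq' : q' = Tpol P r γ π q + e) :
    Tpol P r γ π q' - q' =
      γ • Pop P π (Tpol P r γ π q - q) - (1 - γ • Pmat P π).mulVec e := by
  have hstep : q' - q = (Tpol P r γ π q - q) + e := by rw [hq']; abel
  calc Tpol P r γ π q' - q'
      = (Tpol P r γ π q' - Tpol P r γ π q) - e := by rw [hq']; abel
    _ = γ • Pop P π (Tpol P r γ π q - q) + γ • Pop P π e - e := by
        rw [Tpol_sub_Tpol_s10, hstep, Pop_add, smul_add]
    _ = γ • Pop P π (Tpol P r γ π q - q) - (1 - γ • Pmat P π).mulVec e := by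
        rw [one_sub_smul_Pmat_mulVec]; abel

end

variable {S A : Type} [Fintype S] [Fintype A] [Nonempty S] [Nonempty A]
  [DecidableEq S] [DecidableEq A]

theorem movi_residual_recursion_general (P : S × A → S → ℝ)
    (r : S × A → ℝ) (γ : ℝ)
    (π : ℕ → S → A) (q h : ℕ → S × A → ℝ) (ε : ℕ → S × A → ℝ)
    (hmovi : IsMoVI P r γ π q h ε) (j : ℕ) (hj : 1 ≤ j) :
    ∀ sa : S × A,
      Tpol P r γ (π j) (q j) sa - q j sa =
        γ * Pop P (π j) (fun sa' => Tpol P r γ (π j) (q (j - 1)) sa' - q (j - 1) sa') sa -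
          (1 - γ • Pmat P (π j)).mulVec (ε j) sa := by
  obtain ⟨k, rfl⟩ := Nat.exists_eq_add_of_le' hj
  have hq : q (k + 1) = Tpol P r γ (π (k + 1)) (q k) + ε (k + 1) := hmovi.2.2.1 k
  exact congrFun (Tpol_sub_self_of_eq_Tpol_add P r γ (π (k + 1)) (q k) _ _ hq)

/-- One-step residual recursion for MoVI. -/
theorem movi_residual_recursion (P : S × A → S → ℝ) (hP : IsKernel P)
    (r : S × A → ℝ) (γ : ℝ) (hγ0 : 0 < γ) (hγ1 : γ < 1)
    (π : ℕ → S → A) (q h : ℕ → S × A → ℝ) (ε : ℕ → S × A → ℝ)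
    (hmovi : IsMoVI P r γ π q h ε) (j : ℕ) (hj : 1 ≤ j) :
    ∀ sa : S × A,
      Tpol P r γ (π j) (q j) sa - q j sa =
        γ * Pop P (π j) (fun sa' => Tpol P r γ (π j) (q (j - 1)) sa' - q (j - 1) sa') sa -
          (1 - γ • Pmat P (π j)).mulVec (ε j) sa :=
  movi_residual_recursion_general P r γ π q h ε hmovi j hj

end MoVIFormal
end
end
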